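/- arXiv:1111.0071 — 2 statements merged into one kernel-verified Lean document; each statement's English description precedes it below -/
import Mathlib

section
/- Let p¹, p², …, pⁿ ∈ ℝ² (n ≥ 2) be distinct points and fix k ∈ {2,…,n}. With a = (x_{pᵏ} − x_{p¹})/2, c = d_{p¹pᵏ}/2, let p* = p¹ + ((c+a)/(2c))(pᵏ − p¹). If for every l ∈ {2,…,n} \ {k} one has d_{pᵏp*} + x_{pᵏ} < d_{pˡp*} + x_{pˡ}, then pᵏ is a Voronoi neighbor of p¹, i.e., V(p¹) ∩ V(pᵏ) contains at least two distinct points. -/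
/-!
The weighted bisector `d(p¹, q) + x_{p¹} = d(pᵏ, q) + x_{pᵏ}` is the branch
`d(p¹, q) - d(pᵏ, q) = 2a` of the hyperbola with foci `p¹`, `pᵏ`, and `p*` is its vertex.
With `m` the midpoint of `p¹pᵏ`, `u` the unit vector towards `pᵏ` and `w ⟂ u` a unit vector,
`θ ↦ m + (a cosh θ) u + (√(c² - a²) sinh θ) w` parametrizes the branch continuously, passes
through `p*` at `θ = 0`, and has distances `c cosh θ ± a` to the two foci. The strict
inequalities at `p*` persist along the curve near `θ = 0`, so such points lie in
`V(p¹) ∩ V(pᵏ)`, and for `θ ≠ 0` they differ from `p*` because their distance `c cosh θ + a`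
to `p¹` does.
-/

noncomputable abbrev Pt := EuclideanSpace ℝ (Fin 2)

/-- The energy-based Voronoi cell of the generator `p i` among the generators `p`. -/
def Vcell {n : ℕ} (p : Fin n → Pt) (i : Fin n) : Set Pt :=
  {q : Pt | ∀ j : Fin n, j ≠ i → dist (p i) q + p i 0 ≤ dist (p j) q + p j 0}

open Real Topology
open scoped RealInnerProductSpace

section Hyperbola

variable {E : Type*} [NormedAddCommGroup E] [InnerProductSpace ℝ E]

lemma norm_smul_add_smul_sq_of_orthonormal {u w : E} (hu : ‖u‖ = 1) (hw : ‖w‖ = 1)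
    (huw : ⟪u, w⟫ = 0) (s t : ℝ) : ‖s • u + t • w‖ ^ 2 = s ^ 2 + t ^ 2 := by
  rw [norm_add_sq_real, real_inner_smul_left, real_inner_smul_right, huw, norm_smul, norm_smul,
    hu, hw, Real.norm_eq_abs, Real.norm_eq_abs]
  simp only [mul_one, mul_zero, sq_abs]
  ring

/-- For orthonormal `u, w` and `|a| ≤ c`: the branch `a x > 0` of `x²/a² - y²/(c² - a²) = 1` in the
frame `(m; u, w)`, degenerating to the axis `x = 0` if `a = 0` and to a ray if `|a| = c`. -/
noncomputable def hyperbolaBranch (m u w : E) (a c θ : ℝ) : E :=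
  m + (a * cosh θ) • u + (√(c ^ 2 - a ^ 2) * sinh θ) • w

lemma continuous_hyperbolaBranch (m u w : E) (a c : ℝ) :
    Continuous (hyperbolaBranch m u w a c) := by
  unfold hyperbolaBranch
  fun_prop

lemma hyperbolaBranch_zero (m u w : E) (a c : ℝ) : hyperbolaBranch m u w a c 0 = m + a • u := by
  simp [hyperbolaBranch]

lemma hyperbolaBranch_neg_neg (m u w : E) (a c θ : ℝ) :
    hyperbolaBranch m (-u) w (-a) c θ = hyperbolaBranch m u w a c θ := by
  simp [hyperbolaBranch]

lemma exists_norm_eq_one_inner_eq_zero [Fact (Module.finrank ℝ E = 2)] {u : E} (hu : ‖u‖ = 1) :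
    ∃ w : E, ‖w‖ = 1 ∧ ⟪u, w⟫ = 0 :=
  have : FiniteDimensional ℝ E := .of_fact_finrank_eq_two
  let o : Orientation ℝ E (Fin 2) := (Module.finBasisOfFinrankEq ℝ E Fact.out).orientation
  ⟨o.rightAngleRotation u, by simp [hu], by simp⟩

variable {m u w : E} {a c : ℝ}

lemma dist_sub_smul_hyperbolaBranch (hu : ‖u‖ = 1) (hw : ‖w‖ = 1) (huw : ⟪u, w⟫ = 0)
    (hac : |a| ≤ c) (θ : ℝ) :
    dist (m - c • u) (hyperbolaBranch m u w a c θ) = c * cosh θ + a := by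
  have hvec : hyperbolaBranch m u w a c θ - (m - c • u)
      = (c + a * cosh θ) • u + (√(c ^ 2 - a ^ 2) * sinh θ) • w := by
    simp only [hyperbolaBranch]
    module
  have hsq : ‖hyperbolaBranch m u w a c θ - (m - c • u)‖ ^ 2 = (c * cosh θ + a) ^ 2 := by
    have hb : √(c ^ 2 - a ^ 2) ^ 2 = c ^ 2 - a ^ 2 :=
      sq_sqrt (sub_nonneg.2 (sq_le_sq' (abs_le.1 hac).1 (abs_le.1 hac).2))
    rw [hvec, norm_smul_add_smul_sq_of_orthonormal hu hw huw, mul_pow, hb]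
    linear_combination (c ^ 2 - a ^ 2) * sinh_sq θ
  have hpos : 0 ≤ c * cosh θ + a := by
    nlinarith [one_le_cosh θ, abs_le.1 hac, abs_nonneg a]
  rw [dist_comm, dist_eq_norm, ← sq_eq_sq₀ (norm_nonneg _) hpos, hsq]

lemma dist_add_smul_hyperbolaBranch (hu : ‖u‖ = 1) (hw : ‖w‖ = 1) (huw : ⟪u, w⟫ = 0)
    (hac : |a| ≤ c) (θ : ℝ) :
    dist (m + c • u) (hyperbolaBranch m u w a c θ) = c * cosh θ - a := by
  have h := dist_sub_smul_hyperbolaBranch (m := m) (norm_neg u ▸ hu) hw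
    (by rwa [inner_neg_left, neg_eq_zero]) ((abs_neg a).symm ▸ hac) θ
  rwa [hyperbolaBranch_neg_neg, smul_neg, sub_neg_eq_add, ← sub_eq_add_neg] at h

lemma exists_continuous_dist_eq_cosh [Fact (Module.finrank ℝ E = 2)] {x y : E} (hc : 0 < c)
    (hxy : dist x y = 2 * c) (hac : |a| ≤ c) :
    ∃ γ : ℝ → E, Continuous γ ∧ γ 0 = x + ((c + a) / (2 * c)) • (y - x) ∧
      ∀ θ, dist x (γ θ) = c * cosh θ + a ∧ dist y (γ θ) = c * cosh θ - a := by
  set u : E := (2 * c)⁻¹ • (y - x)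
  have hu : ‖u‖ = 1 := by
    rw [norm_smul, ← dist_eq_norm', hxy, norm_inv, Real.norm_of_nonneg (by positivity),
      inv_mul_cancel₀ (by positivity)]
  obtain ⟨w, hw, huw⟩ := exists_norm_eq_one_inner_eq_zero hu
  have hcu : c • u = (2⁻¹ : ℝ) • (y - x) := by
    rw [smul_smul]; congr 1; field_simp
  have hx : midpoint ℝ x y - c • u = x := by
    rw [hcu, midpoint_eq_smul_add (R := ℝ), invOf_eq_inv]; module
  have hy : midpoint ℝ x y + c • u = y := by
    rw [hcu, midpoint_eq_smul_add (R := ℝ), invOf_eq_inv]; module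
  refine ⟨hyperbolaBranch (midpoint ℝ x y) u w a c, continuous_hyperbolaBranch _ u w a c, ?_,
    fun θ => ⟨?_, ?_⟩⟩
  · rw [hyperbolaBranch_zero, show (c + a) / (2 * c) = 2⁻¹ + a * (2 * c)⁻¹ by field_simp,
      midpoint_eq_smul_add (R := ℝ), invOf_eq_inv]
    module
  · simpa only [hx] using dist_sub_smul_hyperbolaBranch (m := midpoint ℝ x y) hu hw huw hac θ
  · simpa only [hy] using dist_add_smul_hyperbolaBranch (m := midpoint ℝ x y) hu hw huw hac θ

end Hyperbola

lemma Continuous.exists_ne_mem_of_isOpen {X : Type*} [TopologicalSpace X] {γ : ℝ → X}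
    (hγ : Continuous γ) {U : Set X} (hU : IsOpen U) {t : ℝ} (ht : γ t ∈ U) : ∃ s ≠ t, γ s ∈ U :=
  ((((hγ.tendsto t).eventually (hU.mem_nhds ht)).filter_mono nhdsWithin_le_nhds).and
    (self_mem_nhdsWithin : {t}ᶜ ∈ 𝓝[≠] t)).exists.imp fun _ h => ⟨h.2, h.1⟩

instance : Fact (Module.finrank ℝ Pt = 2) := ⟨by simp⟩

section Voronoi

variable {n : ℕ} {p : Fin n → Pt} {i k : Fin n}

lemma mem_Vcell_inter_Vcell {q : Pt} (hbis : dist (p i) q + p i 0 = dist (p k) q + p k 0)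
    (hrest : ∀ l, l ≠ i → l ≠ k → dist (p k) q + p k 0 ≤ dist (p l) q + p l 0) :
    q ∈ Vcell p i ∩ Vcell p k := by
  refine ⟨fun j hj => ?_, fun j hj => ?_⟩
  · rcases eq_or_ne j k with rfl | hjk
    · exact hbis.le
    · exact hbis.trans_le (hrest j hj hjk)
  · rcases eq_or_ne j i with rfl | hji
    · exact hbis.ge
    · exact hrest j hji hj

lemma isOpen_setOf_forall_lt (p : Fin n → Pt) (i k : Fin n) :
    IsOpen {q : Pt | ∀ l, l ≠ i → l ≠ k → dist (p k) q + p k 0 < dist (p l) q + p l 0} := by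
  simp only [Set.ofPred_forall]
  exact isOpen_iInter_of_finite fun l => isOpen_iInter_of_finite fun _ =>
    isOpen_iInter_of_finite fun _ => isOpen_lt (by fun_prop) (by fun_prop)

end Voronoi

/-- with `p* = p¹ + ((c+a)/(2c))(pᵏ - p¹)` (here `p 0` plays the role of
`p¹`), if `d_{pᵏp*} + x_{pᵏ} < d_{pˡp*} + x_{pˡ}` for every `l ∉ {1, k}`, then `pᵏ` is a
Voronoi neighbor of `p¹`: `V(p¹) ∩ V(pᵏ)` contains at least two distinct points. -/
theorem strict_test_is_voronoi_neighbor
    (n : ℕ) (p : Fin (n + 2) → Pt) (hp : Function.Injective p)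
    (k : Fin (n + 2)) (hk : k ≠ 0) :
    let a : ℝ := (p k 0 - p 0 0) / 2
    let c : ℝ := dist (p 0) (p k) / 2
    let pstar : Pt := p 0 + ((c + a) / (2 * c)) • (p k - p 0)
    (∀ l : Fin (n + 2), l ≠ 0 → l ≠ k →
        dist (p k) pstar + p k 0 < dist (p l) pstar + p l 0) →
      ∃ q1 q2 : Pt, q1 ≠ q2 ∧
        q1 ∈ Vcell p 0 ∩ Vcell p k ∧ q2 ∈ Vcell p 0 ∩ Vcell p k := by
  intro a c pstar hlt
  have hc : 0 < c := half_pos (dist_pos.2 (hp.ne hk.symm))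
  have hac : |a| ≤ c := by
    simpa [a, c, abs_div, dist_comm] using
      div_le_div_of_nonneg_right (Real.dist_eq _ _ ▸ PiLp.dist_apply_le (p k) (p 0) 0) two_pos.le
  obtain ⟨γ, hγ, hγ0, hdist⟩ :=
    exists_continuous_dist_eq_cosh (x := p 0) (y := p k) hc (by simp only [c]; ring) hac
  have hbis (θ : ℝ) : dist (p 0) (γ θ) + p 0 0 = dist (p k) (γ θ) + p k 0 := by
    rw [(hdist θ).1, (hdist θ).2]; simp only [a]; ring
  obtain ⟨θ, hθ0, hθU⟩ := hγ.exists_ne_mem_of_isOpen (isOpen_setOf_forall_lt p 0 k)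
    (show γ 0 ∈ _ by rw [hγ0]; exact hlt)
  refine ⟨γ 0, γ θ, fun h => ?_, mem_Vcell_inter_Vcell (hbis 0) fun l hl0 hlk => ?_,
    mem_Vcell_inter_Vcell (hbis θ) fun l hl0 hlk => (hθU l hl0 hlk).le⟩
  · have := congrArg (dist (p 0)) h
    rw [(hdist 0).1, (hdist θ).1, cosh_zero, add_left_inj, mul_right_inj' hc.ne'] at this
    exact (one_lt_cosh.2 hθ0).ne' this.symm
  · rw [hγ0]; exact (hlt l hl0 hlk).le
end

section
/- Let p¹, p² ∈ ℝ² satisfy x_{p¹} < x_{p²} and y_{p¹} < y_{p²}, and let a = (x_{p²} − x_{p¹})/2, b = (y_{p²} − y_{p¹})/2 with transformed coordinates x'_p, y'_p defined from p¹, p². Every p ∈ ℝ² with x'_p ≤ (a/b)|y'_p| satisfies d_{p¹p} + x_{p¹} ≤ d_{p²p} + x_{p²}; that is, the asymptote-based region D_lower(p¹|p²) is contained in the energy-based Voronoi cell of p¹ with respect to p². -/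
/-!
In the rotated frame centred at the midpoint of `p¹p²`, the foci sit at `(∓c, 0)` with
`c = d_{p¹p²}/2 = √(a² + b²)`, and `J(p¹,p) ≤ J(p²,p)` says that `p` lies on the far side of the
hyperbola branch `d_{p¹p} − d_{p²p} = 2a`, whose asymptotes are `x' = ±(a/b) y'`. Squaring twice,
the inequality reduces to `b² x'² − a² b² ≤ a² y'²`, which holds (with room `a² b²` to spare)
whenever `b x' ≤ a |y'|`.
-/

lemma dist_eq_sqrt_fin_two (p q : EuclideanSpace ℝ (Fin 2)) :
    dist p q = √((p 0 - q 0) ^ 2 + (p 1 - q 1) ^ 2) := by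
  rw [EuclideanSpace.dist_eq, Fin.sum_univ_two, Real.dist_eq, Real.dist_eq, sq_abs, sq_abs]

/-- Rotating `(u, v)` to the frame whose first axis is `(X, Y) / d`, with `d = ‖(X, Y)‖`, preserves
the squared distance to the point `-t • (X, Y)`, which lands at `(-t d, 0)`. -/
lemma sq_add_sq_eq_rotate (u v X Y d t : ℝ) (hd : d ≠ 0) (hdsq : d ^ 2 = X ^ 2 + Y ^ 2) :
    (u + t * X) ^ 2 + (v + t * Y) ^ 2
      = (u * (X / d) + v * (Y / d) + t * d) ^ 2 + (-u * (Y / d) + v * (X / d)) ^ 2 := by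
  field_simp
  linear_combination (u ^ 2 + v ^ 2 - t ^ 2 * d ^ 2) * hdsq

lemma sqrt_add_sq_le_sqrt_sub_sq_add_of_mul_le_mul_abs {a b c x y : ℝ} (ha : 0 < a) (hb : 0 < b)
    (hc : 0 ≤ c) (hcab : c ^ 2 = a ^ 2 + b ^ 2) (hxy : x * b ≤ a * |y|) :
    √((x + c) ^ 2 + y ^ 2) ≤ √((x - c) ^ 2 + y ^ 2) + 2 * a := by
  set s := √((x - c) ^ 2 + y ^ 2)
  have hs : 0 ≤ s := Real.sqrt_nonneg _
  have hs2 : s ^ 2 = (x - c) ^ 2 + y ^ 2 := Real.sq_sqrt (by positivity)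
  have key : x * c - a ^ 2 ≤ a * s := by
    rcases le_or_gt (x * c) (a ^ 2) with hle | hgt
    · nlinarith [mul_nonneg ha.le hs]
    · have hx : 0 < x := by nlinarith
      have hxy2 : (x * b) ^ 2 ≤ (a * |y|) ^ 2 := pow_le_pow_left₀ (by positivity) hxy 2
      have hsq : (x * c - a ^ 2) ^ 2 ≤ (a * s) ^ 2 := by
        rw [mul_pow a |y|, sq_abs] at hxy2
        nlinarith
      exact abs_le_of_sq_le_sq' hsq (by positivity) |>.2
  rw [Real.sqrt_le_left (by positivity)]
  nlinarith

/-- every point `p` with `x'_p ≤ (a/b)|y'_p|` (the asymptote-based lower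
approximation `D_lower(p¹|p²)`) lies in the energy-based Voronoi cell of `p¹` with
respect to `p²`. -/
theorem asymptote_lower_approximation
    (p1 p2 p : Pt) (hx : p1 0 < p2 0) (hy : p1 1 < p2 1) :
    let a : ℝ := (p2 0 - p1 0) / 2
    let b : ℝ := (p2 1 - p1 1) / 2
    let cosα : ℝ := (p2 0 - p1 0) / dist p1 p2
    let sinα : ℝ := (p2 1 - p1 1) / dist p1 p2
    let x' : ℝ := (p 0 - (p1 0 + p2 0) / 2) * cosα + (p 1 - (p1 1 + p2 1) / 2) * sinα
    let y' : ℝ := -(p 0 - (p1 0 + p2 0) / 2) * sinα + (p 1 - (p1 1 + p2 1) / 2) * cosα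
    x' ≤ (a / b) * |y'| → dist p1 p + p1 0 ≤ dist p2 p + p2 0 := by
  intro a b cosα sinα x' y' hp
  have hdsq : dist p1 p2 ^ 2 = (p2 0 - p1 0) ^ 2 + (p2 1 - p1 1) ^ 2 := by
    rw [dist_eq_sqrt_fin_two, Real.sq_sqrt (by positivity)]; ring
  set d := dist p1 p2
  have hd : 0 < d := dist_pos.2 fun h ↦ hx.ne (h ▸ rfl)
  have rotate (t : ℝ) := sq_add_sq_eq_rotate (p 0 - (p1 0 + p2 0) / 2) (p 1 - (p1 1 + p2 1) / 2)
    (p2 0 - p1 0) (p2 1 - p1 1) d t hd.ne' hdsq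
  have h1 : dist p1 p = √((x' + d / 2) ^ 2 + y' ^ 2) := by
    rw [dist_eq_sqrt_fin_two]; congr 1; linear_combination rotate (1 / 2)
  have h2 : dist p2 p = √((x' - d / 2) ^ 2 + y' ^ 2) := by
    rw [dist_eq_sqrt_fin_two]; congr 1; linear_combination rotate (-1 / 2)
  have hb : 0 < b := by positivity
  have hxy : x' * b ≤ a * |y'| := by
    rwa [div_mul_eq_mul_div, le_div_iff₀ hb] at hp
  have hle := sqrt_add_sq_le_sqrt_sub_sq_add_of_mul_le_mul_abs (c := d / 2) (by positivity) hb
    (by positivity) (by linear_combination hdsq / 4) hxy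
  rw [h1, h2]
  linarith [show 2 * a = p2 0 - p1 0 by ring]
end
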